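/- Let A, B, C, D, F, G, E be compatible matrices over ℂ (or H). If A X + Y B + C Z₁ D + F Z₂ G = E is solvable, then the rank of the block matrix with rows (E, A), (B, 0), (D, 0), (G, 0) equals rank of the stacked matrix [B; D; G] plus rank A. -/

import Mathlib

/-!
Write `S = [B; D; G]`. Solvability says `E = A X + W S` with `W = [Y, C Z₁, F Z₂]`, so
`[E A; S 0] = [1 W; 0 1] * [0 A; S 0] * [1 0; X 1]`. The outer factors are unipotent, hence
invertible, and `[0 A; S 0]` is block diagonal after swapping the column blocks.
-/

open Matrix LinearMap

theorem LinearMap.finrank_range_prodMap {K M N M' N' : Type*} [Field K]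
    [AddCommGroup M] [AddCommGroup N] [AddCommGroup M'] [AddCommGroup N']
    [Module K M] [Module K N] [Module K M'] [Module K N']
    [FiniteDimensional K M] [FiniteDimensional K N] (f : M →ₗ[K] M') (g : N →ₗ[K] N') :
    Module.finrank K (range (f.prodMap g)) =
      Module.finrank K (range f) + Module.finrank K (range g) := by
  have hinj : Function.Injective ((range f).subtype.prodMap (range g).subtype) :=
    (range f).injective_subtype.prodMap (range g).injective_subtype
  rw [← Module.finrank_prod, ← finrank_range_of_inj hinj, range_prodMap, range_prodMap,
    Submodule.range_subtype, Submodule.range_subtype]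

namespace Matrix

variable {K l m n o : Type*} [Field K]

theorem mulVecLin_fromBlocks_zero₁₂_zero₂₁ [Fintype n] [Fintype o]
    (A : Matrix l n K) (D : Matrix m o K) :
    (fromBlocks A 0 0 D).mulVecLin =
      (LinearEquiv.sumArrowLequivProdArrow l m K K).symm.toLinearMap ∘ₗ
        A.mulVecLin.prodMap D.mulVecLin ∘ₗ
          (LinearEquiv.sumArrowLequivProdArrow n o K K).toLinearMap := by
  ext x (i | i) <;>
    simp [fromBlocks_mulVec, LinearEquiv.sumArrowLequivProdArrow, Equiv.sumArrowEquivProdArrow]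

theorem rank_fromBlocks_zero₁₂_zero₂₁ [Fintype n] [Fintype o]
    (A : Matrix l n K) (D : Matrix m o K) :
    (fromBlocks A 0 0 D).rank = A.rank + D.rank := by
  rw [rank, mulVecLin_fromBlocks_zero₁₂_zero₂₁, range_comp, range_comp_of_range_eq_top _
    (range_eq_top.mpr (LinearEquiv.sumArrowLequivProdArrow n o K K).surjective),
    LinearEquiv.finrank_map_eq, finrank_range_prodMap, rank, rank]

theorem rank_fromBlocks_zero₁₁_zero₂₂ [Fintype n] [Fintype o]
    (A : Matrix l o K) (D : Matrix m n K) :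
    (fromBlocks 0 A D 0).rank = A.rank + D.rank := by
  have hswap : fromBlocks 0 A D 0 =
      (fromBlocks A 0 0 D).submatrix (Equiv.refl _) (Equiv.sumComm n o) := by
    ext (i | i) (j | j) <;> rfl
  rw [hswap, rank_submatrix, rank_fromBlocks_zero₁₂_zero₂₁]

theorem rank_fromBlocks_zero₂₂_of_mul_add_mul_eq
    [Fintype l] [Fintype m] [Fintype n] [Fintype o]
    [DecidableEq l] [DecidableEq m] [DecidableEq n] [DecidableEq o]
    {E : Matrix l n K} {A : Matrix l o K} {B : Matrix m n K}
    (X : Matrix o n K) (W : Matrix l m K) (hE : A * X + W * B = E) :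
    (fromBlocks E A B 0).rank = B.rank + A.rank := by
  have hfactor : fromBlocks E A B 0 =
      (fromBlocks 1 W 0 1 : Matrix (l ⊕ m) (l ⊕ m) K) * fromBlocks 0 A B 0 *
        (fromBlocks 1 0 X 1 : Matrix (n ⊕ o) (n ⊕ o) K) := by
    rw [fromBlocks_multiply, fromBlocks_multiply, ← hE]
    congr 1 <;> simp [add_comm]
  have hleft : IsUnit (fromBlocks 1 W 0 1 : Matrix (l ⊕ m) (l ⊕ m) K).det := by simp
  have hright : IsUnit (fromBlocks 1 0 X 1 : Matrix (n ⊕ o) (n ⊕ o) K).det := by simp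
  rw [hfactor, rank_mul_eq_left_of_isUnit_det _ _ hright,
    rank_mul_eq_right_of_isUnit_det _ _ hleft, rank_fromBlocks_zero₁₁_zero₂₂, add_comm]

end Matrix

/-- If A X + Y B + C Z₁ D + F Z₂ G = E is solvable then
rank [E A; B 0; D 0; G 0] = rank [B; D; G] + rank A. -/
theorem stmt14 {mm nn p q r s t u : ℕ}
    (E : Matrix (Fin mm) (Fin nn) ℂ)
    (A : Matrix (Fin mm) (Fin p) ℂ) (B : Matrix (Fin q) (Fin nn) ℂ)
    (C : Matrix (Fin mm) (Fin r) ℂ) (D : Matrix (Fin s) (Fin nn) ℂ)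
    (F : Matrix (Fin mm) (Fin t) ℂ) (G : Matrix (Fin u) (Fin nn) ℂ)
    (X : Matrix (Fin p) (Fin nn) ℂ) (Y : Matrix (Fin mm) (Fin q) ℂ)
    (Z₁ : Matrix (Fin r) (Fin s) ℂ) (Z₂ : Matrix (Fin t) (Fin u) ℂ)
    (hsol : A * X + Y * B + C * Z₁ * D + F * Z₂ * G = E) :
    (Matrix.fromBlocks E A (Matrix.fromRows B (Matrix.fromRows D G)) 0).rank
      = (Matrix.fromRows B (Matrix.fromRows D G)).rank + A.rank := by
  refine rank_fromBlocks_zero₂₂_of_mul_add_mul_eq X (fromCols Y (fromCols (C * Z₁) (F * Z₂))) ?_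
  rw [fromCols_mul_fromRows, fromCols_mul_fromRows, ← hsol]
  simp only [Matrix.mul_assoc, add_assoc]
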